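/- Let m ∈ ℤ and suppose a = −p^{−m}[m]_{p,q} and b = −p^{−m} q^m. Then for every k ∈ ℤ with k ≠ −m one has c^{a,b}_{−m−k}(k) = 0, where c^{a,b}_n(k) = p^{−k}[k]_{p,q} − a p^{−k} q^k − b p^{−k−n} q^k [n]_{p,q}; consequently the subspace U = span{v_i : i ∈ ℤ, i ≠ −m} of M_{a,b} satisfies L_n U ⊆ U for all n ∈ ℤ, and U is a nonzero proper submodule, so M_{a,b} is reducible. -/
import Mathlib


/-- The `(p,q)`-quantum integer `[n]_{p,q} = (p^n - q^n)/(p - q)`. -/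
noncomputable def qint (p q : ℂ) (n : ℤ) : ℂ := (p ^ n - q ^ n) / (p - q)

/-- The structure constant `c^{a,b}_n(k) = p^{-k}[k] - a p^{-k} q^k - b p^{-k-n} q^k [n]`. -/
noncomputable def cab (p q a b : ℂ) (n k : ℤ) : ℂ :=
  p ^ (-k) * qint p q k - a * p ^ (-k) * q ^ k - b * p ^ (-k - n) * q ^ k * qint p q n

/-- The operator `L_n` on `M_{a,b}`, realized on `ℤ →₀ ℂ` (basis `v_k = single k 1`),
`L_n v_k = c^{a,b}_n(k) v_{k+n}`. -/
noncomputable def Lab (p q a b : ℂ) (n : ℤ) : (ℤ →₀ ℂ) →ₗ[ℂ] (ℤ →₀ ℂ) :=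
  Finsupp.lsum ℂ fun k => cab p q a b n k • Finsupp.lsingle (k + n)

/-- The defining relation of a `V_{p,q}`-module. -/
def IsVpqModule (p q : ℂ) {M : Type} [AddCommGroup M] [Module ℂ M]
    (L : ℤ → M →ₗ[ℂ] M) : Prop :=
  ∀ m n : ℤ, ∀ v : M,
    (p ^ (-n) * q ^ n) • L n (L m v) - (p ^ (-m) * q ^ m) • L m (L n v) =
      (qint p q m / p ^ m - qint p q n / p ^ n) • L (m + n) v

lemma cab_key (p q : ℂ) (hp : p ≠ 0) (hq : q ≠ 0) (hpq : p ≠ q) (m k : ℤ) :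
    cab p q (-(p ^ (-m) * qint p q m)) (-(p ^ (-m) * q ^ m)) (-m - k) k = 0 := by
  have hd : p - q ≠ 0 := sub_ne_zero.mpr hpq
  simp only [cab, qint]
  rw [show (-k : ℤ) - (-m - k) = m by ring,
      show p ^ (-k) = (p ^ k)⁻¹ by rw [zpow_neg],
      show p ^ (-m) = (p ^ m)⁻¹ by rw [zpow_neg],
      show p ^ (-m - k) = (p ^ m * p ^ k)⁻¹ by
        rw [show (-m : ℤ) - k = -(m + k) by ring, zpow_neg, zpow_add₀ hp],
      show q ^ (-m - k) = (q ^ m * q ^ k)⁻¹ by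
        rw [show (-m : ℤ) - k = -(m + k) by ring, zpow_neg, zpow_add₀ hq]]
  have hA : p ^ k ≠ 0 := zpow_ne_zero _ hp
  have hB : q ^ k ≠ 0 := zpow_ne_zero _ hq
  have hC : p ^ m ≠ 0 := zpow_ne_zero _ hp
  have hD : q ^ m ≠ 0 := zpow_ne_zero _ hq
  generalize p ^ k = A at *
  generalize q ^ k = B at *
  generalize p ^ m = C at *
  generalize q ^ m = D at *
  have hrw : A⁻¹ * ((A - B) / (p - q)) - -(C⁻¹ * ((C - D) / (p - q))) * A⁻¹ * B -
      -(C⁻¹ * D) * C * B * (((C * A)⁻¹ - (D * B)⁻¹) / (p - q)) =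
      (A⁻¹ * (A - B) + C⁻¹ * (C - D) * A⁻¹ * B +
        C⁻¹ * D * C * B * ((C * A)⁻¹ - (D * B)⁻¹)) / (p - q) := by ring
  rw [hrw, div_eq_zero_iff]
  left
  field_simp
  ring

lemma Lab_single (p q a b : ℂ) (n i : ℤ) :
    Lab p q a b n (Finsupp.single i 1) = cab p q a b n i • Finsupp.single (i + n) 1 := by
  rw [Lab, Finsupp.lsum_apply, Finsupp.sum_single_index]
  · simp
  · simp

/-- If `a = -p^{-m}[m]` and `b = -p^{-m} q^m`, then `c^{a,b}_{-m-k}(k) = 0` for `k ≠ -m`,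
and the span `U` of the `v_i` with `i ≠ -m` is a nonzero proper submodule of `M_{a,b}`;
hence `M_{a,b}` is reducible. -/
theorem Mab_reducible_case1 (p q : ℂ) (hp : p ≠ 0) (hq : q ≠ 0) (hpq : p ≠ q)
    (a b : ℂ) (m : ℤ)
    (ha : a = -(p ^ (-m) * qint p q m)) (hb : b = -(p ^ (-m) * q ^ m)) :
    (∀ k : ℤ, k ≠ -m → cab p q a b (-m - k) k = 0) ∧
    (∀ U : Submodule ℂ (ℤ →₀ ℂ),
      U = Submodule.span ℂ ((fun i : ℤ => Finsupp.single i (1 : ℂ)) '' {i : ℤ | i ≠ -m}) →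
      (∀ n : ℤ, ∀ u ∈ U, Lab p q a b n u ∈ U) ∧ U ≠ ⊥ ∧ U ≠ ⊤) := by
  subst ha hb
  refine ⟨fun k _ => cab_key p q hp hq hpq m k, fun U hU => ?_⟩
  set a := -(p ^ (-m) * qint p q m)
  set b := -(p ^ (-m) * q ^ m)
  constructor
  · intro n u hu
    rw [hU] at hu ⊢
    refine Submodule.span_induction ?_ ?_ ?_ ?_ hu
    · rintro x ⟨i, hi, rfl⟩
      simp only [Set.mem_setOf_eq] at hi
      rw [Lab_single]
      by_cases h : i + n = -m
      · have hn : n = -m - i := by omega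
        rw [hn, cab_key p q hp hq hpq m i, zero_smul]
        exact Submodule.zero_mem _
      · exact Submodule.smul_mem _ _ (Submodule.subset_span ⟨i + n, h, rfl⟩)
    · simp
    · intro x y _ _ hx hy
      simpa using Submodule.add_mem _ hx hy
    · intro c x _ hx
      simpa using Submodule.smul_mem _ c hx
  constructor
  · rw [hU]
    intro h
    have hmem : Finsupp.single (-m + 1) (1 : ℂ) ∈
        Submodule.span ℂ ((fun i : ℤ => Finsupp.single i (1 : ℂ)) '' {i : ℤ | i ≠ -m}) :=
      Submodule.subset_span ⟨-m + 1, by simp, rfl⟩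
    rw [h, Submodule.mem_bot] at hmem
    exact (one_ne_zero : (1:ℂ) ≠ 0) (Finsupp.single_eq_zero.mp hmem)
  · rw [hU]
    intro h
    have hle : Submodule.span ℂ ((fun i : ℤ => Finsupp.single i (1 : ℂ)) '' {i : ℤ | i ≠ -m}) ≤
        LinearMap.ker (Finsupp.lapply (-m) : (ℤ →₀ ℂ) →ₗ[ℂ] ℂ) := by
      rw [Submodule.span_le]
      rintro x ⟨i, hi, rfl⟩
      simp only [Set.mem_setOf_eq] at hi
      simp [LinearMap.mem_ker, Finsupp.lapply, Finsupp.single_apply, hi, Ne.symm hi]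
    have : Finsupp.single (-m) (1 : ℂ) ∈
        LinearMap.ker (Finsupp.lapply (-m) : (ℤ →₀ ℂ) →ₗ[ℂ] ℂ) :=
      hle (h ▸ Submodule.mem_top)
    simp [LinearMap.mem_ker, Finsupp.lapply] at this
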